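/- Distributivity of C_G over disjunctions of atoms (forwarding setting): For any H-compliant forwarding state (V,M), nonempty G ⊆ N, and atoms p₁,…,p_k, (V,M) ⊨_H C_G(p₁ ∨ … ∨ p_k) iff (V,M) ⊨_H C_G p₁ ∨ … ∨ C_G p_k. -/

import Mathlib

structure Msg (P A : Type) where
  sender : P
  grp : Set P
  fact : A

inductive Form (P A : Type) where
  | atom : A → Form P A
  | neg  : Form P A → Form P A
  | and  : Form P A → Form P A → Form P A
  | or   : Form P A → Form P A → Form P A
  | ck   : Set P → Form P A → Form P A

/-- The negation-free (positive) fragment L⁺. -/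
def Positive {P A : Type} : Form P A → Prop
  | .atom _ => True
  | .neg _ => False
  | .and φ ψ => Positive φ ∧ Positive ψ
  | .or φ ψ => Positive φ ∧ Positive ψ
  | .ck _ φ => Positive φ

/-- Atoms occurring in a formula. -/
def FactsF {P A : Type} : Form P A → Set A
  | .atom p => {p}
  | .neg φ => FactsF φ
  | .and φ ψ => FactsF φ ∪ FactsF ψ
  | .or φ ψ => FactsF φ ∪ FactsF ψ
  | .ck _ φ => FactsF φ

/-- Facts occurring in a set of messages. -/
def Facts {P A : Type} (M : Set (Msg P A)) : Set A := {p | ∃ m ∈ M, m.fact = p}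

/-- All messages are H-compliant. -/
def HComp {P A : Type} (H : Set (Set P)) (M : Set (Msg P A)) : Prop :=
  ∀ m ∈ M, m.grp ∈ H

/-- (j,B,p) ⤳ (i,A,p): p ∉ At_i and i ∈ B. -/
def leadsto {P A : Type} (owner : A → P) (m m' : Msg P A) : Prop :=
  m'.fact = m.fact ∧ owner m'.fact ≠ m'.sender ∧ m'.sender ∈ m.grp

/-- An explanation of a message m in (V,M): a non-circular ⤳-chain of
    p-messages in M starting at a player who initially knows p = m.fact
    and ending at m. -/
def Explains {P A : Type} (owner : A → P) (V : Set A) (M : Set (Msg P A))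
    (m : Msg P A) : Prop :=
  ∃ L : List (Msg P A),
    (∀ x ∈ L, x ∈ M) ∧
    List.Chain' (leadsto owner) L ∧
    (L.map Msg.sender).Nodup ∧
    (∀ x ∈ L, x.fact = m.fact) ∧
    (∃ m₀, L.head? = some m₀ ∧ owner m₀.fact = m₀.sender ∧ m₀.fact ∈ V) ∧
    L.getLast? = some m

/-- A forwarding state: every message has a sender in its group and an explanation. -/
def FwState {P A : Type} (owner : A → P) (V : Set A) (M : Set (Msg P A)) : Prop :=
  ∀ m ∈ M, m.sender ∈ m.grp ∧ Explains owner V M m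

/-- Indistinguishability for player i: equality of (V_i, M_i). -/
def indist {P A : Type} (owner : A → P) (i : P)
    (s t : Set A × Set (Msg P A)) : Prop :=
  {p ∈ s.1 | owner p = i} = {p ∈ t.1 | owner p = i} ∧
  {m ∈ s.2 | i ∈ m.grp} = {m ∈ t.2 | i ∈ m.grp}

/-- ∼_G: transitive closure of the union of the ∼_i, i ∈ G. -/
def reach {P A : Type} (owner : A → P) (G : Set P) :
    Set A × Set (Msg P A) → Set A × Set (Msg P A) → Prop :=
  Relation.TransGen (fun s t => ∃ i ∈ G, indist owner i s t)

/-- Semantics ⊨_H (forwarding setting): C_G quantifies over H-compliant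
    forwarding states. -/
def sat {P A : Type} (owner : A → P) (H : Set (Set P)) :
    Form P A → Set A → Set (Msg P A) → Prop
  | .atom p, V, _ => p ∈ V
  | .neg φ, V, M => ¬ sat owner H φ V M
  | .and φ ψ, V, M => sat owner H φ V M ∧ sat owner H ψ V M
  | .or φ ψ, V, M => sat owner H φ V M ∨ sat owner H ψ V M
  | .ck G φ, V, M => ∀ V' M', FwState owner V' M' → HComp H M' →
      reach owner G (V, M) (V', M') → sat owner H φ V' M'

/-- The complete hypergraph: all nonempty subsets of players. -/
def completeH (P : Type) : Set (Set P) := {B | B.Nonempty}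

/-- Disjunction p₁ ∨ … ∨ p_k of the atoms p :: ps. -/
def disjList {P A : Type} (p : A) (ps : List A) : Form P A :=
  ps.foldl (fun φ q => Form.or φ (Form.atom q)) (Form.atom p)

/-!
If some state reachable from `(V, M)` lacks the atom `q`, then so does a reachable state that
differs from `(V, M)` only in `q`. Indistinguishability for each player compares states fact
by fact, so grafting the `q`-slice (the atom `q` and the `q`-messages) of every state of a path
onto `(V, M)` gives another path; it ends at `(V, M)` with its `q`-slice deleted, since a
forwarding state lacking `q` has no `q`-messages. Deleting the slices of `p₁, …, p_k` one after
the other thus yields a reachable H-compliant forwarding state in which no `pᵢ` holds, unless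
one of the `C_G pᵢ` holds already.
-/

section CommonKnowledge

variable {P A : Type}

theorem sat_foldl_or (owner : A → P) (H : Set (Set P)) (ps : List A) (φ : Form P A)
    (V : Set A) (M : Set (Msg P A)) :
    sat owner H (ps.foldl (fun φ q => Form.or φ (Form.atom q)) φ) V M ↔
      sat owner H φ V M ∨ ∃ q ∈ ps, q ∈ V := by
  induction ps generalizing φ with
  | nil => simp
  | cons a l ih => simp [ih, sat, or_assoc]

theorem sat_disjList (owner : A → P) (H : Set (Set P)) (p : A) (ps : List A)
    (V : Set A) (M : Set (Msg P A)) :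
    sat owner H (disjList p ps) V M ↔ ∃ q ∈ p :: ps, q ∈ V := by
  simp [disjList, sat_foldl_or, sat]

theorem indist_symm {owner : A → P} {i : P} {s t : Set A × Set (Msg P A)}
    (h : indist owner i s t) : indist owner i t s :=
  ⟨h.1.symm, h.2.symm⟩

theorem reach_symm {owner : A → P} {G : Set P} {s t : Set A × Set (Msg P A)}
    (h : reach owner G s t) : reach owner G t s :=
  Relation.TransGen.mono (fun _ _ ⟨i, hi, hit⟩ => ⟨i, hi, indist_symm hit⟩) _ _
    (Relation.TransGen.swap _ _ h)

theorem sat_ck_of_reach {owner : A → P} {H : Set (Set P)} {G : Set P} {φ : Form P A}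
    {V W : Set A} {M N : Set (Msg P A)} (hr : reach owner G (V, M) (W, N))
    (h : sat owner H (.ck G φ) V M) : sat owner H (.ck G φ) W N :=
  fun V' M' hS' hC' hr' => h V' M' hS' hC' (hr.trans hr')

theorem HComp.mono {H : Set (Set P)} {M N : Set (Msg P A)} (hC : HComp H M) (hNM : N ⊆ M) :
    HComp H N :=
  fun m hm => hC m (hNM hm)

theorem FwState.fact_mem {owner : A → P} {V : Set A} {M : Set (Msg P A)}
    (hS : FwState owner V M) {m : Msg P A} (hm : m ∈ M) : m.fact ∈ V := by
  obtain ⟨-, L, -, -, -, hfacts, ⟨m₀, hhead, -, hm₀V⟩, -⟩ := hS m hm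
  rw [← hfacts m₀ (List.mem_of_mem_head? hhead)]
  exact hm₀V

theorem FwState.erase_fact {owner : A → P} {V : Set A} {M : Set (Msg P A)}
    (hS : FwState owner V M) (q : A) :
    FwState owner (V \ {q}) {m ∈ M | m.fact ≠ q} := by
  rintro m ⟨hm, hmq⟩
  obtain ⟨hsender, L, hLM, hchain, hnodup, hfacts, ⟨m₀, hhead, howner, hm₀V⟩, hlast⟩ := hS m hm
  refine ⟨hsender, L, fun x hx => ⟨hLM x hx, hfacts x hx ▸ hmq⟩, hchain, hnodup, hfacts,
    ⟨m₀, hhead, howner, hm₀V, ?_⟩, hlast⟩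
  exact hfacts m₀ (List.mem_of_mem_head? hhead) ▸ hmq

def replaceSlice (q : A) (b s : Set A × Set (Msg P A)) : Set A × Set (Msg P A) :=
  (b.1 \ {q} ∪ s.1 ∩ {q}, {m ∈ b.2 | m.fact ≠ q} ∪ {m ∈ s.2 | m.fact = q})

theorem indist_replaceSlice {owner : A → P} {i : P} (q : A) (b : Set A × Set (Msg P A))
    {s t : Set A × Set (Msg P A)} (h : indist owner i s t) :
    indist owner i (replaceSlice q b s) (replaceSlice q b t) := by
  obtain ⟨hV, hM⟩ := h
  constructor
  · ext x
    have hVx := Set.ext_iff.mp hV x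
    simp only [Set.mem_ofPred_eq] at hVx
    by_cases hx : x = q <;>
      simp only [replaceSlice, Set.mem_ofPred_eq, Set.mem_union, Set.mem_sdiff,
        Set.mem_singleton_iff, Set.mem_inter_iff] <;> tauto
  · ext m
    have hMm := Set.ext_iff.mp hM m
    simp only [Set.mem_ofPred_eq] at hMm
    by_cases hm : m.fact = q <;>
      simp only [replaceSlice, Set.mem_ofPred_eq, Set.mem_union] <;> tauto

theorem reach_replaceSlice {owner : A → P} {G : Set P} (q : A) (b : Set A × Set (Msg P A))
    {s t : Set A × Set (Msg P A)} (h : reach owner G s t) :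
    reach owner G (replaceSlice q b s) (replaceSlice q b t) :=
  Relation.TransGen.lift (replaceSlice q b)
    (fun _ _ ⟨i, hi, hit⟩ => ⟨i, hi, indist_replaceSlice q b hit⟩) _ _ h

theorem replaceSlice_self (q : A) (s : Set A × Set (Msg P A)) : replaceSlice q s s = s := by
  refine Prod.ext ?_ ?_
  · ext x; by_cases hx : x = q <;> simp [replaceSlice, hx]
  · ext m; by_cases hm : m.fact = q <;> simp [replaceSlice, hm]

theorem replaceSlice_of_not_mem {owner : A → P} {q : A} {V W : Set A} {M N : Set (Msg P A)}
    (hS : FwState owner W N) (hq : q ∉ W) :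
    replaceSlice q (V, M) (W, N) = (V \ {q}, {m ∈ M | m.fact ≠ q}) := by
  have hN : ∀ m ∈ N, m.fact ≠ q := fun m hm hmq => hq (hmq ▸ hS.fact_mem hm)
  refine Prod.ext ?_ ?_
  · ext x
    simp only [replaceSlice, Set.mem_union, Set.mem_inter_iff, Set.mem_singleton_iff]
    exact ⟨fun h => h.elim id fun ⟨hx, hxq⟩ => absurd (hxq ▸ hx) hq, Or.inl⟩
  · ext m
    simp only [replaceSlice, Set.mem_union, Set.mem_ofPred_eq]
    exact ⟨fun h => h.elim id fun ⟨hm, hmq⟩ => absurd hmq (hN m hm), Or.inl⟩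

theorem reach_erase_of_not_sat_ck {owner : A → P} {H : Set (Set P)} {G : Set P} {q : A}
    {V : Set A} {M : Set (Msg P A)} (h : ¬ sat owner H (.ck G (.atom q)) V M) :
    reach owner G (V, M) (V \ {q}, {m ∈ M | m.fact ≠ q}) := by
  simp only [sat, not_forall] at h
  obtain ⟨W, N, hS, -, hr, hq⟩ := h
  simpa only [replaceSlice_self, replaceSlice_of_not_mem hS hq] using
    reach_replaceSlice q (V, M) hr

theorem exists_reach_forall_not_mem {owner : A → P} {H : Set (Set P)} {G : Set P}
    {V : Set A} {M : Set (Msg P A)} (hS : FwState owner V M) (hC : HComp H M)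
    (p : A) (ps : List A) (h : ∀ q ∈ p :: ps, ¬ sat owner H (.ck G (.atom q)) V M) :
    ∃ V' M', FwState owner V' M' ∧ HComp H M' ∧ reach owner G (V, M) (V', M') ∧
      ∀ q ∈ p :: ps, q ∉ V' := by
  induction ps with
  | nil =>
    refine ⟨_, _, hS.erase_fact p, hC.mono fun m hm => hm.1,
      reach_erase_of_not_sat_ck (h p List.mem_cons_self), ?_⟩
    simp
  | cons a l ih =>
    have hsub : p :: l ⊆ p :: a :: l := List.cons_subset_cons p (List.subset_cons_self a l)
    obtain ⟨V₁, M₁, hS₁, hC₁, hr₁, hV₁⟩ := ih fun q hq => h q (hsub hq)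
    have ha : ¬ sat owner H (.ck G (.atom a)) V₁ M₁ :=
      fun ha => h a (by simp) (sat_ck_of_reach (reach_symm hr₁) ha)
    refine ⟨_, _, hS₁.erase_fact a, hC₁.mono fun m hm => hm.1,
      hr₁.trans (reach_erase_of_not_sat_ck ha), ?_⟩
    rintro q hq ⟨hqV₁, hqa⟩
    simp only [List.mem_cons] at hq
    rcases hq with rfl | rfl | hq
    · exact hV₁ q List.mem_cons_self hqV₁
    · exact hqa rfl
    · exact hV₁ q (List.mem_cons_of_mem p hq) hqV₁

end CommonKnowledge

theorem fw_ck_distributes_over_atom_disjunction_general {P A : Type}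
    (owner : A → P) (H : Set (Set P)) (V : Set A) (M : Set (Msg P A))
    (hS : FwState owner V M) (hC : HComp H M)
    (G : Set P) (p : A) (ps : List A) :
    sat owner H (.ck G (disjList p ps)) V M ↔
      (sat owner H (.ck G (.atom p)) V M ∨
        ∃ q ∈ ps, sat owner H (.ck G (.atom q)) V M) := by
  constructor
  · intro h
    by_contra hnone
    have hall : ∀ q ∈ p :: ps, ¬ sat owner H (.ck G (.atom q)) V M := by
      simpa [not_or] using hnone
    obtain ⟨V', M', hS', hC', hr, hV'⟩ := exists_reach_forall_not_mem hS hC p ps hall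
    obtain ⟨q, hq, hqV'⟩ := (sat_disjList owner H p ps V' M').mp (h V' M' hS' hC' hr)
    exact hV' q hq hqV'
  · rintro (h | ⟨q, hq, h⟩) V' M' hS' hC' hr <;> rw [sat_disjList]
    exacts [⟨p, List.mem_cons_self, h V' M' hS' hC' hr⟩,
      ⟨q, List.mem_cons_of_mem p hq, h V' M' hS' hC' hr⟩]

theorem fw_ck_distributes_over_atom_disjunction {P A : Type} [Fintype P]
    (owner : A → P) (H : Set (Set P)) (V : Set A) (M : Set (Msg P A))
    (hS : FwState owner V M) (hC : HComp H M)
    (G : Set P) (hG : G.Nonempty) (p : A) (ps : List A) :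
    sat owner H (.ck G (disjList p ps)) V M ↔
      (sat owner H (.ck G (.atom p)) V M ∨
        ∃ q ∈ ps, sat owner H (.ck G (.atom q)) V M) :=
  fw_ck_distributes_over_atom_disjunction_general owner H V M hS hC G p ps
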